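/- arXiv:1211.2394 — 5 statements merged into one kernel-verified Lean document; each statement's English description precedes it below -/
import Mathlib

section
/- With A as defined from (d_{ij}) and strictly positive c with Σ_i c_i = 1 (a_{ij} = d_{ij} c_i for i ≠ j, a_{ii} = −Σ_{j≠i} d_{ij} c_j), the kernel of A is exactly the one-dimensional span of c, and the image of A is the hyperplane {x ∈ ℝ^{N+1} : Σ_i x_i = 0}. -/
/-!
Write `M` for the Maxwell–Stefan matrix, so that
`(M x)ᵢ = ∑_{j ≠ i} d i j (c i x j - c j x i)`. Then `M c = 0`, and conversely if `M x = 0`,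
pick `i` maximising `x j / c j`: every summand of `(M x)ᵢ` is `≤ 0`, so all vanish and
`x = (x i / c i) • c`. Symmetry of `d` makes the column sums of `M` vanish, so the range lies in
the hyperplane `∑ xᵢ = 0`; both have codimension one, hence they coincide.
-/

open Finset Matrix

namespace MaxwellStefan

variable {ι : Type*} [Fintype ι]

def coordSum : (ι → ℝ) →ₗ[ℝ] ℝ :=
  ∑ i, LinearMap.proj i

@[simp]
theorem coordSum_apply (x : ι → ℝ) : coordSum x = ∑ i, x i := by
  simp [coordSum]

theorem finrank_ker_coordSum [Nonempty ι] :
    Module.finrank ℝ (LinearMap.ker (coordSum : (ι → ℝ) →ₗ[ℝ] ℝ)) = Fintype.card ι - 1 := by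
  classical
  have hsurj : LinearMap.range (coordSum : (ι → ℝ) →ₗ[ℝ] ℝ) = ⊤ :=
    LinearMap.range_eq_top.mpr fun r =>
      ⟨Pi.single (Classical.arbitrary ι) r, by simp⟩
  have := LinearMap.finrank_range_add_finrank_ker (coordSum : (ι → ℝ) →ₗ[ℝ] ℝ)
  rw [hsurj, finrank_top, Module.finrank_self, Module.finrank_fintype_fun_eq_card] at this
  omega

variable [DecidableEq ι]

def matrix (d : Matrix ι ι ℝ) (c : ι → ℝ) : Matrix ι ι ℝ :=
  Matrix.of fun i j => if i = j then -∑ k ∈ univ.erase i, d i k * c k else d i j * c i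

theorem eq_matrix {d A : Matrix ι ι ℝ} {c : ι → ℝ}
    (hAoff : ∀ i j, i ≠ j → A i j = d i j * c i)
    (hAdiag : ∀ i, A i i = -∑ j ∈ univ.erase i, d i j * c j) :
    A = matrix d c := by
  ext i j
  by_cases hij : i = j
  · subst hij; simp [matrix, hAdiag]
  · simp [matrix, hij, hAoff i j hij]

theorem mulVec_apply (d : Matrix ι ι ℝ) (c x : ι → ℝ) (i : ι) :
    (matrix d c *ᵥ x) i = ∑ j ∈ univ.erase i, d i j * (c i * x j - c j * x i) := by
  rw [Matrix.mulVec, dotProduct, ← add_sum_erase _ _ (mem_univ i)]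
  have hoff : ∀ j ∈ univ.erase i, matrix d c i j * x j = d i j * c i * x j := fun j hj => by
    simp [matrix, (ne_of_mem_erase hj).symm]
  have hdiag : matrix d c i i = -∑ k ∈ univ.erase i, d i k * c k := by simp [matrix]
  rw [sum_congr rfl hoff, hdiag, neg_mul, sum_mul, neg_add_eq_sub, ← sum_sub_distrib]
  exact sum_congr rfl fun _ _ => by ring

theorem mulVec_self (d : Matrix ι ι ℝ) (c : ι → ℝ) : matrix d c *ᵥ c = 0 := by
  ext i
  simp [mulVec_apply, mul_comm]

theorem one_vecMul_matrix {d : Matrix ι ι ℝ} (hd : d.IsSymm) (c : ι → ℝ) :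
    1 ᵥ* matrix d c = 0 := by
  ext j
  simp only [vecMul, dotProduct, Pi.one_apply, one_mul, Pi.zero_apply]
  rw [← add_sum_erase _ _ (mem_univ j)]
  have hoff : ∀ i ∈ univ.erase j, matrix d c i j = d j i * c i := fun i hi => by
    simp [matrix, ne_of_mem_erase hi, hd.apply j i]
  rw [sum_congr rfl hoff]
  simp [matrix]

theorem eq_smul_of_mulVec_eq_zero [Nonempty ι] {d : Matrix ι ι ℝ}
    (hdpos : ∀ i j, i ≠ j → 0 < d i j) {c : ι → ℝ} (hc : ∀ i, 0 < c i) {x : ι → ℝ}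
    (hx : matrix d c *ᵥ x = 0) : ∃ r : ℝ, r • c = x := by
  obtain ⟨i, hi⟩ := Finite.exists_max fun j => x j / c j
  have hterm : ∀ j ∈ univ.erase i, d i j * (c i * x j - c j * x i) ≤ 0 := fun j hj => by
    have hcross : c i * x j ≤ c j * x i := by
      have := hi j
      rw [div_le_div_iff₀ (hc j) (hc i)] at this
      linarith
    exact mul_nonpos_of_nonneg_of_nonpos (hdpos i j (ne_of_mem_erase hj).symm).le
      (sub_nonpos.mpr hcross)
  have hzero := (sum_eq_zero_iff_of_nonpos hterm).mp (by rw [← mulVec_apply, hx]; rfl)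
  refine ⟨x i / c i, funext fun j => ?_⟩
  have hci := (hc i).ne'
  by_cases hji : j = i
  · subst hji; simp [div_mul_cancel₀ _ hci]
  · have hcross : c i * x j - c j * x i = 0 :=
      (mul_eq_zero.mp (hzero j (mem_erase.mpr ⟨hji, mem_univ j⟩))).resolve_left
        (hdpos i j (Ne.symm hji)).ne'
    simp only [Pi.smul_apply, smul_eq_mul]
    field_simp
    linarith

theorem ker_eq_span [Nonempty ι] {d : Matrix ι ι ℝ} (hdpos : ∀ i j, i ≠ j → 0 < d i j)
    {c : ι → ℝ} (hc : ∀ i, 0 < c i) :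
    LinearMap.ker (Matrix.toLin' (matrix d c)) = Submodule.span ℝ {c} := by
  refine le_antisymm (fun x hx => ?_) ?_
  · exact Submodule.mem_span_singleton.mpr (eq_smul_of_mulVec_eq_zero hdpos hc hx)
  · rw [Submodule.span_singleton_le_iff_mem, LinearMap.mem_ker, Matrix.toLin'_apply]
    exact mulVec_self d c

theorem range_le_ker_coordSum {d : Matrix ι ι ℝ} (hd : d.IsSymm) (c : ι → ℝ) :
    LinearMap.range (Matrix.toLin' (matrix d c)) ≤ LinearMap.ker coordSum := by
  rintro _ ⟨x, rfl⟩
  rw [LinearMap.mem_ker, coordSum_apply, toLin'_apply]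
  calc ∑ i, (matrix d c *ᵥ x) i = 1 ⬝ᵥ matrix d c *ᵥ x := by simp [dotProduct]
    _ = (1 ᵥ* matrix d c) ⬝ᵥ x := dotProduct_mulVec _ _ _
    _ = 0 := by rw [one_vecMul_matrix hd, zero_dotProduct]

theorem range_eq_ker_coordSum [Nonempty ι] {d : Matrix ι ι ℝ} (hd : d.IsSymm)
    (hdpos : ∀ i j, i ≠ j → 0 < d i j) {c : ι → ℝ} (hc : ∀ i, 0 < c i) :
    LinearMap.range (Matrix.toLin' (matrix d c)) = LinearMap.ker coordSum := by
  refine Submodule.eq_of_le_of_finrank_eq (range_le_ker_coordSum hd c) ?_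
  have hc0 : c ≠ 0 := fun h => (hc (Classical.arbitrary ι)).ne' (congrFun h _)
  have := LinearMap.finrank_range_add_finrank_ker (Matrix.toLin' (matrix d c))
  rw [ker_eq_span hdpos hc, finrank_span_singleton hc0,
    Module.finrank_fintype_fun_eq_card] at this
  rw [finrank_ker_coordSum]
  omega

end MaxwellStefan

theorem stmt5_general (N : ℕ)
    (d : Matrix (Fin (N + 1)) (Fin (N + 1)) ℝ) (hd : d.IsSymm)
    (hdpos : ∀ i j, i ≠ j → 0 < d i j)
    (c : Fin (N + 1) → ℝ) (hc : ∀ i, 0 < c i)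
    (A : Matrix (Fin (N + 1)) (Fin (N + 1)) ℝ)
    (hAoff : ∀ i j, i ≠ j → A i j = d i j * c i)
    (hAdiag : ∀ i, A i i = -∑ j ∈ Finset.univ.erase i, d i j * c j) :
    LinearMap.ker (Matrix.toLin' A) = Submodule.span ℝ {c} ∧
      (LinearMap.range (Matrix.toLin' A) : Set (Fin (N + 1) → ℝ)) =
        {x | ∑ i, x i = 0} := by
  obtain rfl := MaxwellStefan.eq_matrix hAoff hAdiag
  refine ⟨MaxwellStefan.ker_eq_span hdpos hc, ?_⟩
  rw [MaxwellStefan.range_eq_ker_coordSum hd hdpos hc]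
  ext x
  simp

/-- For the Maxwell-Stefan matrix `A`, the kernel of `A` is exactly the span of
`c` and the image of `A` is the hyperplane `{x : ∑ i, x i = 0}`. -/
theorem stmt5 (N : ℕ) (hN : 2 ≤ N)
    (d : Matrix (Fin (N + 1)) (Fin (N + 1)) ℝ) (hd : d.IsSymm)
    (hdpos : ∀ i j, i ≠ j → 0 < d i j) (hddiag : ∀ i, d i i = 0)
    (c : Fin (N + 1) → ℝ) (hc : ∀ i, 0 < c i) (hsum : ∑ i, c i = 1)
    (A : Matrix (Fin (N + 1)) (Fin (N + 1)) ℝ)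
    (hAoff : ∀ i j, i ≠ j → A i j = d i j * c i)
    (hAdiag : ∀ i, A i i = -∑ j ∈ Finset.univ.erase i, d i j * c j) :
    LinearMap.ker (Matrix.toLin' A) = Submodule.span ℝ {c} ∧
      (LinearMap.range (Matrix.toLin' A) : Set (Fin (N + 1) → ℝ)) =
        {x | ∑ i, x i = 0} :=
  stmt5_general N d hd hdpos c hc A hAoff hAdiag
end

section
/- With A as above and δ = min_{i≠j} d_{ij} > 0, every nonzero eigenvalue λ of A satisfies λ ≤ −δ; in particular the spectrum of −A is contained in {0} ∪ [δ, ∞). -/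
/-!
Writing an eigenvector of `A` as `x = c * y` turns `A x = λ x` into
`∑ j, d i j * c j * (y j - y i) = λ * y i`, the eigenvalue equation of a weighted graph
Laplacian that is self-adjoint for the weight `c`. Summing it against `c` gives `∑ c y = 0`
when `λ ≠ 0`; pairing it with `c y` gives `λ ∑ c y² = -½ ∑ c i c j d i j (y i - y j)²`.
Since `d i j ≥ δ` off the diagonal, the right side is at most `-δ/2 ∑ c i c j (y i - y j)²`,
which is `-δ` times the `c`-variance of `y`, i.e. `-δ ∑ c y²` for centred `y`.
-/

open Finset Matrix

theorem Matrix.exists_mulVec_eq_smul_of_isRoot_charpoly {n K : Type*} [Fintype n]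
    [DecidableEq n] [Field K] {A : Matrix n n K} {μ : K} (h : A.charpoly.IsRoot μ) :
    ∃ v ≠ 0, A *ᵥ v = μ • v := by
  rw [← A.mem_spectrum_iff_isRoot_charpoly, ← spectrum_toLin',
    ← Module.End.hasEigenvalue_iff_mem_spectrum] at h
  obtain ⟨v, hv⟩ := h.exists_hasEigenvector
  exact ⟨v, hv.2, by simpa using hv.apply_eq_smul⟩

section WeightedLaplacian

variable {ι : Type*} [Fintype ι] {w : ι → ι → ℝ}

theorem sum_sum_mul_sub_eq_zero_of_symm (hw : ∀ i j, w j i = w i j) (y : ι → ℝ) :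
    ∑ i, ∑ j, w i j * (y j - y i) = 0 := by
  have hswap : ∑ i, ∑ j, w i j * y i = ∑ i, ∑ j, w i j * y j := by
    rw [sum_comm]; simp only [hw]
  simp only [mul_sub, sum_sub_distrib, hswap, sub_self]

theorem sum_sum_mul_mul_sub_eq_of_symm (hw : ∀ i j, w j i = w i j) (y : ι → ℝ) :
    ∑ i, ∑ j, w i j * y i * (y j - y i) = -(∑ i, ∑ j, w i j * (y i - y j) ^ 2) / 2 := by
  have hswap :
      ∑ i, ∑ j, w i j * y i * (y j - y i) = ∑ i, ∑ j, w i j * y j * (y i - y j) := by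
    rw [sum_comm]; simp only [hw]
  have hsq : ∀ i j, w i j * (y i - y j) ^ 2
      = -(w i j * y i * (y j - y i) + w i j * y j * (y i - y j)) := fun i j => by ring
  simp only [hsq, sum_neg_distrib, sum_add_distrib, ← hswap]
  ring

theorem sum_sum_mul_mul_sub_sq (c y : ι → ℝ) :
    ∑ i, ∑ j, c i * c j * (y i - y j) ^ 2
      = 2 * ((∑ i, c i) * ∑ i, c i * y i ^ 2 - (∑ i, c i * y i) ^ 2) := by
  have hexp : ∀ i j, c i * c j * (y i - y j) ^ 2
      = c j * (c i * y i ^ 2) + c i * (c j * y j ^ 2) - 2 * (c i * y i) * (c j * y j) :=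
    fun i j => by ring
  simp only [hexp, sum_sub_distrib, sum_add_distrib, ← sum_mul,
    ← mul_sum]
  ring

theorem le_neg_of_weighted_laplacian_eigen {d : ι → ι → ℝ} (hd : ∀ i j, d j i = d i j)
    {δ : ℝ} (hδ : ∀ i j, i ≠ j → δ ≤ d i j) {c : ι → ℝ} (hc : ∀ i, 0 < c i)
    (hsum : ∑ i, c i = 1) {y : ι → ℝ} (hy : y ≠ 0) {lam : ℝ} (hlam : lam ≠ 0)
    (heig : ∀ i, ∑ j, d i j * c j * (y j - y i) = lam * y i) : lam ≤ -δ := by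
  set w : ι → ι → ℝ := fun i j => c i * d i j * c j
  have hw : ∀ i j, w j i = w i j := fun i j => by simp only [w, hd i j]; ring
  have hweig : ∀ i, ∑ j, w i j * (y j - y i) = lam * (c i * y i) := fun i => by
    rw [mul_left_comm, ← heig i, mul_sum]
    exact sum_congr rfl fun j _ => by ring
  have hmean : ∑ i, c i * y i = 0 := by
    have h := sum_sum_mul_sub_eq_zero_of_symm hw y
    simp only [hweig, ← mul_sum] at h
    exact (mul_eq_zero.1 h).resolve_left hlam
  have henergy : lam * ∑ i, c i * y i ^ 2 = -(∑ i, ∑ j, w i j * (y i - y j) ^ 2) / 2 := by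
    rw [← sum_sum_mul_mul_sub_eq_of_symm hw, mul_sum]
    refine sum_congr rfl fun i _ => ?_
    rw [show ∑ j, w i j * y i * (y j - y i) = y i * ∑ j, w i j * (y j - y i) by
      rw [mul_sum]; exact sum_congr rfl fun j _ => by ring, hweig]
    ring
  have hvar : ∑ i, ∑ j, c i * c j * (y i - y j) ^ 2 = 2 * ∑ i, c i * y i ^ 2 := by
    rw [sum_sum_mul_mul_sub_sq, hsum, hmean]; ring
  have hgap :
      δ * ∑ i, ∑ j, c i * c j * (y i - y j) ^ 2 ≤ ∑ i, ∑ j, w i j * (y i - y j) ^ 2 := by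
    simp only [mul_sum]
    refine sum_le_sum fun i _ => sum_le_sum fun j _ => ?_
    rcases eq_or_ne i j with rfl | hij
    · simp
    · have := mul_pos (hc i) (hc j)
      calc δ * (c i * c j * (y i - y j) ^ 2) ≤ d i j * (c i * c j * (y i - y j) ^ 2) := by
            gcongr; exact hδ i j hij
        _ = w i j * (y i - y j) ^ 2 := by ring
  have hpos : 0 < ∑ i, c i * y i ^ 2 := by
    obtain ⟨k, hk⟩ := Function.ne_iff.1 hy
    exact sum_pos' (fun i _ => by have := hc i; positivity)
      ⟨k, mem_univ k, mul_pos (hc k) (pow_two_pos_of_ne_zero hk)⟩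
  have hbound : lam * ∑ i, c i * y i ^ 2 ≤ -δ * ∑ i, c i * y i ^ 2 := by
    rw [hvar] at hgap; linarith
  exact le_of_mul_le_mul_right hbound hpos

end WeightedLaplacian

theorem Matrix.mulVec_mul_apply_of_offDiag_of_diag {ι : Type*} [Fintype ι] [DecidableEq ι]
    {A d : Matrix ι ι ℝ} {c : ι → ℝ} (hAoff : ∀ i j, i ≠ j → A i j = d i j * c i)
    (hAdiag : ∀ i, A i i = -∑ j ∈ univ.erase i, d i j * c j) (y : ι → ℝ) (i : ι) :
    (A *ᵥ (c * y)) i = c i * ∑ j, d i j * c j * (y j - y i) := by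
  rw [mulVec, dotProduct, ← add_sum_erase _ _ (mem_univ i),
    ← add_sum_erase _ _ (mem_univ i), hAdiag, sub_self, mul_zero, zero_add,
    neg_mul, neg_add_eq_sub, sum_mul, ← sum_sub_distrib, mul_sum]
  refine sum_congr rfl fun j hj => ?_
  rw [hAoff i j (ne_of_mem_erase hj).symm, Pi.mul_apply, Pi.mul_apply]
  ring

theorem stmt8_general (N : ℕ)
    (d : Matrix (Fin (N + 1)) (Fin (N + 1)) ℝ) (hd : d.IsSymm)
    (δ : ℝ) (hδ : ∀ i j, i ≠ j → δ ≤ d i j)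
    (c : Fin (N + 1) → ℝ) (hc : ∀ i, 0 < c i) (hsum : ∑ i, c i = 1)
    (A : Matrix (Fin (N + 1)) (Fin (N + 1)) ℝ)
    (hAoff : ∀ i j, i ≠ j → A i j = d i j * c i)
    (hAdiag : ∀ i, A i i = -∑ j ∈ Finset.univ.erase i, d i j * c j) :
    ∀ lam : ℝ, A.charpoly.IsRoot lam → lam ≠ 0 → lam ≤ -δ := by
  intro lam hroot hlam
  obtain ⟨x, hx0, hx⟩ := A.exists_mulVec_eq_smul_of_isRoot_charpoly hroot
  have hcx : c * (x / c) = x := funext fun i => mul_div_cancel₀ _ (hc i).ne'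
  refine le_neg_of_weighted_laplacian_eigen hd.apply hδ hc hsum (y := x / c) ?_ hlam fun i => ?_
  · intro h
    exact hx0 (by rw [← hcx, h, mul_zero])
  · have hi := congrFun hx i
    rw [← hcx, mulVec_mul_apply_of_offDiag_of_diag hAoff hAdiag, Pi.smul_apply,
      smul_eq_mul, Pi.mul_apply, mul_left_comm] at hi
    exact mul_left_cancel₀ (hc i).ne' hi

/-- With `δ > 0` a lower bound for the off-diagonal entries `d_{ij}` (e.g.
`δ = min_{i≠j} d_{ij}`), every nonzero real eigenvalue `λ` of `A` satisfies
`λ ≤ -δ`; in particular `σ(-A) ⊆ {0} ∪ [δ, ∞)`. -/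
theorem stmt8 (N : ℕ) (hN : 1 ≤ N)
    (d : Matrix (Fin (N + 1)) (Fin (N + 1)) ℝ) (hd : d.IsSymm)
    (hdpos : ∀ i j, i ≠ j → 0 < d i j) (hddiag : ∀ i, d i i = 0)
    (δ : ℝ) (hδpos : 0 < δ) (hδ : ∀ i j, i ≠ j → δ ≤ d i j)
    (c : Fin (N + 1) → ℝ) (hc : ∀ i, 0 < c i) (hsum : ∑ i, c i = 1)
    (A : Matrix (Fin (N + 1)) (Fin (N + 1)) ℝ)
    (hAoff : ∀ i j, i ≠ j → A i j = d i j * c i)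
    (hAdiag : ∀ i, A i i = -∑ j ∈ Finset.univ.erase i, d i j * c j) :
    ∀ lam : ℝ, A.charpoly.IsRoot lam → lam ≠ 0 → lam ≤ -δ :=
  stmt8_general N d hd δ hδ c hc hsum A hAoff hAdiag
end

section
/- The inverse of the N×N matrix H with entries h_{ij} = 1/c_{N+1} + δ_{ij}/c_i (where c_1,…,c_N > 0, c_{N+1} = 1 − Σ_{i=1}^N c_i > 0) is the matrix H^{-1} = (η_{ij}) with η_{ii} = (1 − c_i) c_i and η_{ij} = − c_i c_j for i ≠ j. -/
/-!
With `s = ∑ cᵢ`, `H = diag(c⁻¹) + (1 - s)⁻¹ 𝟙𝟙ᵀ` is diagonal plus rank one and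
`G = diag(c) - ccᵀ`. Expanding `H * G`, every rank-one term is a multiple of `𝟙cᵀ`,
with total coefficient `-1 + (1 - s)⁻¹ - (1 - s)⁻¹ s = 0`, so `H * G = 1`.
-/

namespace Matrix

variable {n K : Type*} [Fintype n] [DecidableEq n] [Field K]

theorem diagonal_inv_add_smul_vecMulVec_mul_diagonal_sub_vecMulVec {c : n → K}
    (hc : ∀ i, c i ≠ 0) (hs : 1 - ∑ i, c i ≠ 0) :
    (diagonal c⁻¹ + (1 - ∑ i, c i)⁻¹ • vecMulVec 1 1) * (diagonal c - vecMulVec c c) = 1 := by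
  have hdiag : diagonal c⁻¹ * diagonal c = 1 := by
    rw [diagonal_mul_diagonal, ← diagonal_one]
    exact congrArg diagonal (funext fun i => inv_mul_cancel₀ (hc i))
  have hrank : diagonal c⁻¹ * vecMulVec c c = vecMulVec 1 c := by
    rw [mul_vecMulVec]
    congr 1
    ext i
    simp [mulVec_diagonal, inv_mul_cancel₀ (hc i)]
  have hones : vecMulVec 1 1 * diagonal c = vecMulVec (1 : n → K) c := by
    rw [vecMulVec_mul]
    congr 1
    ext i
    simp [vecMul_diagonal]
  have hsq : vecMulVec 1 1 * vecMulVec c c = (∑ i, c i) • vecMulVec (1 : n → K) c := by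
    rw [vecMulVec_mul_vecMulVec, one_dotProduct, vecMulVec_smul]
  rw [add_mul, mul_sub, mul_sub, smul_mul, smul_mul, hdiag, hrank, hones, hsq, smul_smul]
  have hscalar : (1 - ∑ i, c i)⁻¹ - (1 - ∑ i, c i)⁻¹ * ∑ i, c i = 1 := by
    field_simp
  rw [← sub_smul, hscalar, one_smul, sub_add_cancel]

end Matrix

open Matrix

theorem stmt12_general (N : ℕ)
    (c : Fin N → ℝ) (hc : ∀ i, 0 < c i) (hsum : ∑ i, c i < 1)
    (H G : Matrix (Fin N) (Fin N) ℝ)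
    (hH : ∀ i j, H i j = 1 / (1 - ∑ k, c k) + (if i = j then 1 / c i else 0))
    (hG : ∀ i j, G i j = if i = j then (1 - c i) * c i else -(c i * c j)) :
    H * G = 1 ∧ G * H = 1 ∧ H⁻¹ = G := by
  have hH' : H = diagonal c⁻¹ + (1 - ∑ k, c k)⁻¹ • vecMulVec 1 1 := by
    ext i j
    by_cases h : i = j <;> simp [hH, h, add_comm]
  have hG' : G = diagonal c - vecMulVec c c := by
    ext i j
    by_cases h : i = j <;> simp [hG, h, vecMulVec_apply, sub_mul]
  have hHG : H * G = 1 := by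
    rw [hH', hG']
    exact diagonal_inv_add_smul_vecMulVec_mul_diagonal_sub_vecMulVec (fun i => (hc i).ne')
      (sub_pos.2 hsum).ne'
  exact ⟨hHG, mul_eq_one_comm.1 hHG, inv_eq_right_inv hHG⟩

/-- The inverse of the Hessian `H` (entries `h_{ij} = 1/c_{N+1} + δ_{ij}/c_i`,
`c_{N+1} = 1 - ∑ c_i > 0`) is the matrix with entries `η_{ii} = (1 - c_i) c_i`
and `η_{ij} = -c_i c_j` for `i ≠ j`. -/
theorem stmt12 (N : ℕ) (hN : 1 ≤ N)
    (c : Fin N → ℝ) (hc : ∀ i, 0 < c i) (hsum : ∑ i, c i < 1)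
    (H G : Matrix (Fin N) (Fin N) ℝ)
    (hH : ∀ i j, H i j = 1 / (1 - ∑ k, c k) + (if i = j then 1 / c i else 0))
    (hG : ∀ i j, G i j = if i = j then (1 - c i) * c i else -(c i * c j)) :
    H * G = 1 ∧ G * H = 1 ∧ H⁻¹ = G :=
  stmt12_general N c hc hsum H G hH hG
end

section
/- Let N ≥ 2, let (d_{ij}) be symmetric with d_{ij} > 0 for i ≠ j, d_{ii} = 0, and let c be strictly positive with Σ_{i=1}^{N+1} c_i = 1. Define A_0 ∈ ℝ^{N×N} by a^0_{ij} = −(d_{ij} − d_{i,N+1}) c_i for i ≠ j and a^0_{ii} = Σ_{j≤N, j≠i}(d_{ij} − d_{i,N+1}) c_j + d_{i,N+1}. Then with X = I_{N+1} − e_{N+1} ⊗ (1,…,1,0)^T and A the Maxwell-Stefan matrix (a_{ij} = d_{ij}c_i for i≠j, a_{ii} = −Σ_{j≠i} d_{ij}c_j), the conjugate X^{-1} A X is block upper triangular of the form [[−A_0, b],[0, 0]] with b_i = d_{i,N+1} c_i. -/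
/-!
The Maxwell–Stefan matrix has vanishing column sums because `d` is symmetric. For the rank-one
matrix `P = e ⊗ v` with `e = e_{N+1}` and `v = 𝟙 - e_{N+1}` this gives `v A = -(row N+1 of A)`,
so expanding `(1 + P) A (1 - P) = A + P A - A P - P A P` shows that the last row vanishes, the
last column keeps `A_{i,N+1} = d_{i,N+1} c_i`, and the remaining block is `A_{ij} - A_{i,N+1}`.
On the diagonal this equals `-a⁰_{ii}` once `∑_{j ≤ N, j ≠ i} c_j` is replaced by
`1 - c_{N+1} - c_i`.
-/

open Matrix Finset

namespace Matrix

variable {ι R : Type*} [Fintype ι] [DecidableEq ι] [CommRing R]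

theorem one_add_vecMulVec_mul_mul_one_sub_vecMulVec (A : Matrix ι ι R) (e v : ι → R) :
    (1 + vecMulVec e v) * A * (1 - vecMulVec e v) =
      A + vecMulVec e (v ᵥ* A) - vecMulVec (A *ᵥ e) v -
        vecMulVec e (((v ᵥ* A) ⬝ᵥ e) • v) := by
  have hexpand : (1 + vecMulVec e v) * A * (1 - vecMulVec e v) =
      A + vecMulVec e v * A - A * vecMulVec e v - vecMulVec e v * A * vecMulVec e v := by
    noncomm_ring
  rw [hexpand, vecMulVec_mul, mul_vecMulVec, vecMulVec_mul_vecMulVec]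

section Shear

variable (A : Matrix ι ι R) (k : ι)

theorem one_sub_single_one_vecMul (hA : 1 ᵥ* A = 0) :
    (1 - Pi.single k 1) ᵥ* A = -A.row k := by
  rw [sub_vecMul, hA, single_one_vecMul, zero_sub]

theorem one_add_vecMulVec_single_mul_mul_apply_self_left (hA : 1 ᵥ* A = 0) (j : ι) :
    ((1 + vecMulVec (Pi.single k 1) (1 - Pi.single k 1)) * A *
        (1 - vecMulVec (Pi.single k 1) (1 - Pi.single k 1)) : Matrix ι ι R) k j = 0 := by
  simp [one_add_vecMulVec_mul_mul_one_sub_vecMulVec, one_sub_single_one_vecMul A k hA,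
    vecMulVec_apply]

theorem one_add_vecMulVec_single_mul_mul_apply_self_right (hA : 1 ᵥ* A = 0) {i : ι}
    (hi : i ≠ k) :
    ((1 + vecMulVec (Pi.single k 1) (1 - Pi.single k 1)) * A *
        (1 - vecMulVec (Pi.single k 1) (1 - Pi.single k 1)) : Matrix ι ι R) i k = A i k := by
  simp [one_add_vecMulVec_mul_mul_one_sub_vecMulVec, one_sub_single_one_vecMul A k hA,
    vecMulVec_apply, Pi.single_eq_of_ne hi]

theorem one_add_vecMulVec_single_mul_mul_apply_of_ne (hA : 1 ᵥ* A = 0) {i j : ι}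
    (hi : i ≠ k) (hj : j ≠ k) :
    ((1 + vecMulVec (Pi.single k 1) (1 - Pi.single k 1)) * A *
        (1 - vecMulVec (Pi.single k 1) (1 - Pi.single k 1)) : Matrix ι ι R) i j =
      A i j - A i k := by
  simp [one_add_vecMulVec_mul_mul_one_sub_vecMulVec, one_sub_single_one_vecMul A k hA,
    vecMulVec_apply, Pi.single_eq_of_ne hi, Pi.single_eq_of_ne hj]

end Shear

end Matrix

section MaxwellStefan

variable {R : Type*} [CommRing R]

theorem one_vecMul_eq_zero_of_maxwellStefan {ι : Type*} [Fintype ι] [DecidableEq ι]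
    {d A : Matrix ι ι R} {c : ι → R} (hd : d.IsSymm)
    (hAoff : ∀ i j, i ≠ j → A i j = d i j * c i)
    (hAdiag : ∀ i, A i i = -∑ j ∈ univ.erase i, d i j * c j) :
    1 ᵥ* A = 0 := by
  ext j
  have hcolumn : (1 ᵥ* A) j = ∑ i, A i j := by simp [vecMul, dotProduct]
  have hoff : ∑ i ∈ univ.erase j, A i j = ∑ i ∈ univ.erase j, d j i * c i :=
    sum_congr rfl fun i hi => by rw [hAoff i j (ne_of_mem_erase hi), hd.apply i j]
  rw [hcolumn, ← sum_erase_add _ _ (mem_univ j), hoff, hAdiag, Pi.zero_apply, add_neg_cancel]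

theorem maxwellStefan_castSucc_sub_last {N : ℕ} {d A : Matrix (Fin (N + 1)) (Fin (N + 1)) R}
    {c : Fin (N + 1) → R} (hddiag : ∀ i, d i i = 0) (hsum : ∑ i, c i = 1)
    (hAoff : ∀ i j, i ≠ j → A i j = d i j * c i)
    (hAdiag : ∀ i, A i i = -∑ j ∈ univ.erase i, d i j * c j) (i : Fin N) :
    A i.castSucc i.castSucc - A i.castSucc (Fin.last N) =
      -((∑ j ∈ univ.erase i,
        (d i.castSucc j.castSucc - d i.castSucc (Fin.last N)) * c j.castSucc) +
          d i.castSucc (Fin.last N)) := by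
  have hsumN : ∑ j : Fin N, c j.castSucc = 1 - c (Fin.last N) := by
    rw [← hsum, Fin.sum_univ_castSucc]
    ring
  rw [hAdiag, hAoff _ _ (Fin.castSucc_lt_last i).ne, sum_erase_eq_sub (mem_univ _),
    sum_erase_eq_sub (mem_univ _), Fin.sum_univ_castSucc]
  simp only [sub_mul, sum_sub_distrib, ← mul_sum, hsumN, hddiag]
  ring

end MaxwellStefan

theorem stmt16_general (N : ℕ)
    (d : Matrix (Fin (N + 1)) (Fin (N + 1)) ℝ) (hd : d.IsSymm)
    (hddiag : ∀ i, d i i = 0)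
    (c : Fin (N + 1) → ℝ) (hsum : ∑ i, c i = 1)
    (A : Matrix (Fin (N + 1)) (Fin (N + 1)) ℝ)
    (hAoff : ∀ i j, i ≠ j → A i j = d i j * c i)
    (hAdiag : ∀ i, A i i = -∑ j ∈ Finset.univ.erase i, d i j * c j)
    (A0 : Matrix (Fin N) (Fin N) ℝ)
    (hA0off : ∀ i j : Fin N, i ≠ j → A0 i j =
      -(d i.castSucc j.castSucc - d i.castSucc (Fin.last N)) * c i.castSucc)
    (hA0diag : ∀ i : Fin N, A0 i i =
      (∑ j ∈ Finset.univ.erase i,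
        (d i.castSucc j.castSucc - d i.castSucc (Fin.last N)) * c j.castSucc) +
        d i.castSucc (Fin.last N))
    (b : Fin N → ℝ) (hb : ∀ i : Fin N, b i = d i.castSucc (Fin.last N) * c i.castSucc)
    (e v : Fin (N + 1) → ℝ)
    (he : e = fun i => if i = Fin.last N then 1 else 0)
    (hv : v = fun j => if j = Fin.last N then 0 else 1) :
    (∀ i j : Fin N,
        ((1 + Matrix.vecMulVec e v) * A * (1 - Matrix.vecMulVec e v))
          i.castSucc j.castSucc = -(A0 i j)) ∧
      (∀ i : Fin N,
        ((1 + Matrix.vecMulVec e v) * A * (1 - Matrix.vecMulVec e v))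
          i.castSucc (Fin.last N) = b i) ∧
      (∀ j : Fin (N + 1),
        ((1 + Matrix.vecMulVec e v) * A * (1 - Matrix.vecMulVec e v))
          (Fin.last N) j = 0) := by
  obtain rfl : e = Pi.single (Fin.last N) 1 := by
    ext i
    simp [he, Pi.single_apply]
  obtain rfl : v = 1 - Pi.single (Fin.last N) 1 := by
    ext j
    by_cases hj : j = Fin.last N <;> simp [hv, hj]
  have hcol := one_vecMul_eq_zero_of_maxwellStefan hd hAoff hAdiag
  have hlast (i : Fin N) : i.castSucc ≠ Fin.last N := (Fin.castSucc_lt_last i).ne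
  refine ⟨fun i j => ?_, fun i => ?_,
    Matrix.one_add_vecMulVec_single_mul_mul_apply_self_left A _ hcol⟩
  · rw [Matrix.one_add_vecMulVec_single_mul_mul_apply_of_ne A _ hcol (hlast i) (hlast j)]
    rcases eq_or_ne i j with rfl | hij
    · rw [hA0diag, maxwellStefan_castSucc_sub_last hddiag hsum hAoff hAdiag]
    · rw [hA0off i j hij, hAoff _ _ (Fin.castSucc_injective N |>.ne hij), hAoff _ _ (hlast i)]
      ring
  · rw [Matrix.one_add_vecMulVec_single_mul_mul_apply_self_right A _ hcol (hlast i), hb,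
      hAoff _ _ (hlast i)]

/-- With `X = I - e_{N+1} ⊗ (1,…,1,0)ᵀ` (so `X⁻¹ = I + e_{N+1} ⊗ (1,…,1,0)ᵀ`)
and `A` the Maxwell-Stefan matrix, the conjugate `X⁻¹ A X` is block upper
triangular of the form `[[−A_0, b],[0, 0]]`, where `A_0` has entries
`a⁰_{ij} = −(d_{ij} − d_{i,N+1}) c_i` (`i ≠ j`),
`a⁰_{ii} = ∑_{j≤N, j≠i}(d_{ij} − d_{i,N+1}) c_j + d_{i,N+1}` and
`b_i = d_{i,N+1} c_i`. -/
theorem stmt16 (N : ℕ) (hN : 2 ≤ N)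
    (d : Matrix (Fin (N + 1)) (Fin (N + 1)) ℝ) (hd : d.IsSymm)
    (hdpos : ∀ i j, i ≠ j → 0 < d i j) (hddiag : ∀ i, d i i = 0)
    (c : Fin (N + 1) → ℝ) (hc : ∀ i, 0 < c i) (hsum : ∑ i, c i = 1)
    (A : Matrix (Fin (N + 1)) (Fin (N + 1)) ℝ)
    (hAoff : ∀ i j, i ≠ j → A i j = d i j * c i)
    (hAdiag : ∀ i, A i i = -∑ j ∈ Finset.univ.erase i, d i j * c j)
    (A0 : Matrix (Fin N) (Fin N) ℝ)
    (hA0off : ∀ i j : Fin N, i ≠ j → A0 i j =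
      -(d i.castSucc j.castSucc - d i.castSucc (Fin.last N)) * c i.castSucc)
    (hA0diag : ∀ i : Fin N, A0 i i =
      (∑ j ∈ Finset.univ.erase i,
        (d i.castSucc j.castSucc - d i.castSucc (Fin.last N)) * c j.castSucc) +
        d i.castSucc (Fin.last N))
    (b : Fin N → ℝ) (hb : ∀ i : Fin N, b i = d i.castSucc (Fin.last N) * c i.castSucc)
    (e v : Fin (N + 1) → ℝ)
    (he : e = fun i => if i = Fin.last N then 1 else 0)
    (hv : v = fun j => if j = Fin.last N then 0 else 1) :
    (∀ i j : Fin N,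
        ((1 + Matrix.vecMulVec e v) * A * (1 - Matrix.vecMulVec e v))
          i.castSucc j.castSucc = -(A0 i j)) ∧
      (∀ i : Fin N,
        ((1 + Matrix.vecMulVec e v) * A * (1 - Matrix.vecMulVec e v))
          i.castSucc (Fin.last N) = b i) ∧
      (∀ j : Fin (N + 1),
        ((1 + Matrix.vecMulVec e v) * A * (1 - Matrix.vecMulVec e v))
          (Fin.last N) j = 0) :=
  stmt16_general N d hd hddiag c hsum A hAoff hAdiag A0 hA0off hA0diag b hb e v he hv
end

section
/- With A_0 as above and H the Hessian of the entropy (h_{ij} = 1/c_{N+1} + δ_{ij}/c_i), the matrix B^{-1} = H A_0 is symmetric; consequently B = A_0^{-1} H^{-1} is symmetric and positive definite. -/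
/-!
Let `L` be the weighted graph Laplacian on all `N + 1` species with weights `d_{kl} c_k c_l`,
and `G` the matrix sending `x ∈ ℝᴺ` to `(x, -∑ x) / c`. The matrix `A_0` consists of the first
`N` rows of `L G` (on the diagonal this uses `∑ c = 1`). Since the columns of `L` sum to zero,
multiplying these rows by `H` gives `Gᵀ L G`. Hence `H A_0 = Gᵀ L G` is symmetric, and its
quadratic form at `x` is `½ ∑ d_{kl} c_k c_l (y_k - y_l)²` with `y = G x`. This vanishes only if
`y` is constant, i.e. `(x, -∑ x)` is a multiple of `c`, which forces `x = 0` because `∑ c ≠ 0`.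
So `H A_0` is positive definite, and so is its inverse `B = A_0⁻¹ H⁻¹`.
-/

open Finset Matrix

namespace Matrix

variable {ι R : Type*} [Fintype ι] [DecidableEq ι]

def weightedLaplacian [CommRing R] (w : Matrix ι ι R) : Matrix ι ι R :=
  diagonal (fun i => ∑ j, w i j) - w

section CommRing

variable [CommRing R] {w : Matrix ι ι R}

lemma weightedLaplacian_apply (i j : ι) :
    weightedLaplacian w i j = (if i = j then ∑ k, w i k else 0) - w i j := by
  simp only [weightedLaplacian, sub_apply, diagonal_apply]

lemma isSymm_weightedLaplacian (hw : w.IsSymm) : (weightedLaplacian w).IsSymm :=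
  (isSymm_diagonal _).sub hw

lemma weightedLaplacian_mulVec_one : weightedLaplacian w *ᵥ 1 = 0 := by
  ext i
  rw [weightedLaplacian, sub_mulVec, Pi.sub_apply, mulVec_diagonal]
  simp [mulVec, dotProduct]

lemma one_vecMul_weightedLaplacian (hw : w.IsSymm) : 1 ᵥ* weightedLaplacian w = 0 := by
  rw [← mulVec_transpose, (isSymm_weightedLaplacian hw).eq, weightedLaplacian_mulVec_one]

lemma two_mul_dotProduct_weightedLaplacian_mulVec (hw : w.IsSymm) (v : ι → R) :
    2 * (v ⬝ᵥ weightedLaplacian w *ᵥ v) = ∑ i, ∑ j, w i j * (v i - v j) ^ 2 := by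
  have hform :
      v ⬝ᵥ weightedLaplacian w *ᵥ v = ∑ i, ∑ j, w i j * (v i ^ 2 - v i * v j) := by
    rw [weightedLaplacian, sub_mulVec, dotProduct_sub]
    simp only [dotProduct, mulVec_diagonal]
    simp only [mulVec, dotProduct, sum_mul, mul_sum, ← sum_sub_distrib]
    exact sum_congr rfl fun i _ => sum_congr rfl fun j _ => by ring
  have hswap : ∑ i, ∑ j, w i j * (v i ^ 2 - v i * v j) =
      ∑ i, ∑ j, w i j * (v j ^ 2 - v i * v j) := by
    rw [sum_comm]
    exact sum_congr rfl fun i _ => sum_congr rfl fun j _ => by rw [hw.apply]; ring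
  calc 2 * (v ⬝ᵥ weightedLaplacian w *ᵥ v)
      = ∑ i, ∑ j, w i j * (v i ^ 2 - v i * v j) +
          ∑ i, ∑ j, w i j * (v j ^ 2 - v i * v j) := by
        rw [two_mul, ← hswap, hform]
    _ = ∑ i, ∑ j, w i j * (v i - v j) ^ 2 := by
        rw [← sum_add_distrib]
        refine sum_congr rfl fun i _ => ?_
        rw [← sum_add_distrib]
        exact sum_congr rfl fun j _ => by ring

end CommRing

lemma dotProduct_weightedLaplacian_mulVec_pos [CommRing R] [LinearOrder R]
    [IsStrictOrderedRing R] {w : Matrix ι ι R} (hw : w.IsSymm) (hpos : ∀ i j, i ≠ j → 0 < w i j)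
    {v : ι → R} {i j : ι}
    (hij : v i ≠ v j) : 0 < v ⬝ᵥ weightedLaplacian w *ᵥ v := by
  have hterm : ∀ k l, 0 ≤ w k l * (v k - v l) ^ 2 := by
    intro k l
    rcases eq_or_ne k l with rfl | hkl
    · simp
    · exact mul_nonneg (hpos k l hkl).le (sq_nonneg _)
  have hij_pos : 0 < w i j * (v i - v j) ^ 2 :=
    mul_pos (hpos i j fun h => hij (congrArg v h)) (pow_two_pos_of_ne_zero (sub_ne_zero.mpr hij))
  have htwice : 0 < 2 * (v ⬝ᵥ weightedLaplacian w *ᵥ v) := by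
    rw [two_mul_dotProduct_weightedLaplacian_mulVec hw]
    refine sum_pos' (fun k _ => sum_nonneg fun l _ => hterm k l) ⟨i, mem_univ i, ?_⟩
    exact sum_pos' (fun l _ => hterm i l) ⟨j, mem_univ j, hij_pos⟩
  linarith

end Matrix

noncomputable section MaxwellStefan

variable {N : ℕ} (c : Fin (N + 1) → ℝ)

/-- `completionMatrix c *ᵥ x = (x, -∑ x) / c`, the completion of `x` to a vector with zero sum,
divided componentwise by `c`. -/
def completionMatrix : Matrix (Fin (N + 1)) (Fin N) ℝ :=
  of fun k j => ((if k = j.castSucc then 1 else 0) - if k = Fin.last N then 1 else 0) / c k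

def entropyHessian : Matrix (Fin N) (Fin N) ℝ :=
  of fun i j => 1 / c (Fin.last N) + if i = j then 1 / c i.castSucc else 0

lemma mul_completionMatrix_apply {m : Type*} (M : Matrix m (Fin (N + 1)) ℝ) (k : m) (j : Fin N) :
    (M * completionMatrix c) k j =
      M k j.castSucc / c j.castSucc - M k (Fin.last N) / c (Fin.last N) := by
  simp only [completionMatrix, sub_div, ite_div, one_div, zero_div, mul_apply, of_apply, mul_sub,
    mul_ite, mul_zero, sum_sub_distrib, sum_ite_eq', mem_univ, if_true]
  ring

lemma transpose_completionMatrix_mul_apply {n : Type*} (M : Matrix (Fin (N + 1)) n ℝ)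
    (i : Fin N) (j : n) :
    ((completionMatrix c)ᵀ * M) i j =
      M i.castSucc j / c i.castSucc - M (Fin.last N) j / c (Fin.last N) := by
  simp only [completionMatrix, sub_div, ite_div, one_div, zero_div, mul_apply, transpose_apply,
    of_apply, sub_mul, ite_mul, zero_mul, sum_sub_distrib, sum_ite_eq', mem_univ, if_true]
  ring

lemma completionMatrix_mulVec_castSucc (x : Fin N → ℝ) (i : Fin N) :
    (completionMatrix c *ᵥ x) i.castSucc = x i / c i.castSucc := by
  simp only [mulVec, dotProduct, completionMatrix, of_apply, Fin.castSucc_inj,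
    (Fin.castSucc_lt_last i).ne, if_false, sub_zero, ite_div, one_div, zero_div, ite_mul,
    zero_mul, sum_ite_eq, mem_univ, if_true]
  ring

lemma completionMatrix_mulVec_last (x : Fin N → ℝ) :
    (completionMatrix c *ᵥ x) (Fin.last N) = -(∑ i, x i) / c (Fin.last N) := by
  simp only [mulVec, dotProduct, completionMatrix, of_apply, (Fin.castSucc_lt_last _).ne',
    if_false, if_true, zero_sub, neg_div, one_div, neg_mul, sum_neg_distrib, ← mul_sum]
  ring

lemma entropyHessian_mul_submatrix_castSucc {n : Type*} (M : Matrix (Fin (N + 1)) n ℝ)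
    (hM : 1 ᵥ* M = 0) :
    entropyHessian c * M.submatrix Fin.castSucc id = (completionMatrix c)ᵀ * M := by
  ext i j
  have hcol : ∑ k : Fin N, M k.castSucc j = -M (Fin.last N) j := by
    have := congrFun hM j
    simp only [vecMul, dotProduct, Pi.one_apply, one_mul, Fin.sum_univ_castSucc,
      Pi.zero_apply] at this
    linarith
  rw [transpose_completionMatrix_mul_apply]
  simp only [entropyHessian, one_div, mul_apply, of_apply, submatrix_apply, id_eq, add_mul,
    ite_mul, zero_mul, sum_add_distrib, ← mul_sum, hcol, sum_ite_eq, mem_univ, if_true]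
  ring

lemma eq_submatrix_weightedLaplacian_mul_completionMatrix
    {d : Matrix (Fin (N + 1)) (Fin (N + 1)) ℝ} (hc : ∀ k, c k ≠ 0) (hsum : ∑ k, c k = 1)
    {A0 : Matrix (Fin N) (Fin N) ℝ}
    (hA0off : ∀ i j : Fin N, i ≠ j → A0 i j =
      -(d i.castSucc j.castSucc - d i.castSucc (Fin.last N)) * c i.castSucc)
    (hA0diag : ∀ i : Fin N, A0 i i =
      (∑ j ∈ Finset.univ.erase i,
        (d i.castSucc j.castSucc - d i.castSucc (Fin.last N)) * c j.castSucc) +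
        d i.castSucc (Fin.last N)) :
    A0 = (weightedLaplacian (of fun k l => d k l * c k * c l) * completionMatrix c).submatrix
      Fin.castSucc id := by
  ext i j
  rw [submatrix_apply, id, mul_completionMatrix_apply]
  simp only [weightedLaplacian_apply, of_apply, Fin.castSucc_inj,
    (Fin.castSucc_lt_last _).ne, if_false]
  have hci := hc i.castSucc
  have hcl := hc (Fin.last N)
  rcases eq_or_ne i j with rfl | hij
  · have hsum' : ∑ k : Fin N, c k.castSucc = 1 - c (Fin.last N) := by
      rw [Fin.sum_univ_castSucc] at hsum; linarith
    rw [hA0diag, if_pos rfl, sum_erase_eq_sub (mem_univ i), Fin.sum_univ_castSucc]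
    have hrow : ∑ k : Fin N, d i.castSucc k.castSucc * c i.castSucc * c k.castSucc =
        c i.castSucc * ∑ k : Fin N, d i.castSucc k.castSucc * c k.castSucc := by
      rw [mul_sum]
      exact sum_congr rfl fun _ _ => by ring
    simp only [sub_mul, sum_sub_distrib, ← mul_sum, hsum', hrow]
    field_simp
    ring
  · have hcj := hc j.castSucc
    rw [hA0off i j hij, if_neg hij]
    field_simp
    ring

lemma exists_completionMatrix_mulVec_ne (hc : ∀ k, c k ≠ 0) (hsum : ∑ k, c k = 1)
    {x : Fin N → ℝ} (hx : x ≠ 0) :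
    ∃ k l, (completionMatrix c *ᵥ x) k ≠ (completionMatrix c *ᵥ x) l := by
  by_contra! hconst
  set μ := (completionMatrix c *ᵥ x) (Fin.last N)
  have hxi : ∀ i, x i = μ * c i.castSucc := fun i => by
    rw [← div_eq_iff (hc _), ← completionMatrix_mulVec_castSucc]
    exact hconst _ _
  have hlast : -(∑ i, x i) = μ * c (Fin.last N) := by
    rw [← div_eq_iff (hc _), ← completionMatrix_mulVec_last]
  have hμ : μ = 0 := by
    simp only [hxi, ← mul_sum] at hlast
    rw [Fin.sum_univ_castSucc] at hsum
    linear_combination -hlast - μ * hsum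
  exact hx (funext fun i => by rw [hxi, hμ, zero_mul, Pi.zero_apply])

end MaxwellStefan

theorem stmt18_general (N : ℕ)
    (d : Matrix (Fin (N + 1)) (Fin (N + 1)) ℝ) (hd : d.IsSymm)
    (hdpos : ∀ i j, i ≠ j → 0 < d i j)
    (c : Fin (N + 1) → ℝ) (hc : ∀ i, 0 < c i) (hsum : ∑ i, c i = 1)
    (A0 : Matrix (Fin N) (Fin N) ℝ)
    (hA0off : ∀ i j : Fin N, i ≠ j → A0 i j =
      -(d i.castSucc j.castSucc - d i.castSucc (Fin.last N)) * c i.castSucc)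
    (hA0diag : ∀ i : Fin N, A0 i i =
      (∑ j ∈ Finset.univ.erase i,
        (d i.castSucc j.castSucc - d i.castSucc (Fin.last N)) * c j.castSucc) +
        d i.castSucc (Fin.last N))
    (H : Matrix (Fin N) (Fin N) ℝ)
    (hH : ∀ i j, H i j = 1 / c (Fin.last N) +
      (if i = j then 1 / c i.castSucc else 0)) :
    (H * A0).IsSymm ∧ (A0⁻¹ * H⁻¹).IsSymm ∧ (A0⁻¹ * H⁻¹).PosDef := by
  have hc0 : ∀ k, c k ≠ 0 := fun k => (hc k).ne'
  set G := completionMatrix c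
  set w : Matrix (Fin (N + 1)) (Fin (N + 1)) ℝ := of fun k l => d k l * c k * c l
  have hw : w.IsSymm := IsSymm.ext fun k l => by simp only [w, of_apply, hd.apply]; ring
  have hwpos : ∀ k l, k ≠ l → 0 < w k l := fun k l hkl =>
    mul_pos (mul_pos (hdpos k l hkl) (hc k)) (hc l)
  have hHA : H * A0 = Gᵀ * weightedLaplacian w * G := by
    obtain rfl : H = entropyHessian c := Matrix.ext hH
    rw [eq_submatrix_weightedLaplacian_mul_completionMatrix c hc0 hsum hA0off hA0diag,
      entropyHessian_mul_submatrix_castSucc, Matrix.mul_assoc]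
    rw [← vecMul_vecMul, one_vecMul_weightedLaplacian hw, zero_vecMul]
  have hsymm : (H * A0).IsSymm := by
    rw [hHA, IsSymm, transpose_mul, transpose_mul, (isSymm_weightedLaplacian hw).eq,
      transpose_transpose, Matrix.mul_assoc]
  have hpos : (H * A0).PosDef := by
    refine .of_dotProduct_mulVec_pos (isHermitian_iff_isSymm.mpr hsymm) fun x hx => ?_
    obtain ⟨k, l, hkl⟩ := exists_completionMatrix_mulVec_ne c hc0 hsum hx
    rw [hHA, star_trivial, ← mulVec_mulVec, ← mulVec_mulVec, dotProduct_mulVec,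
      vecMul_transpose]
    exact dotProduct_weightedLaplacian_mulVec_pos hw hwpos hkl
  have hB : (A0⁻¹ * H⁻¹).PosDef := by
    rw [← Matrix.mul_inv_rev]
    exact hpos.inv
  exact ⟨hsymm, isHermitian_iff_isSymm.mp hB.isHermitian, hB⟩

/-- With `H` the Hessian of the entropy (`h_{ij} = 1/c_{N+1} + δ_{ij}/c_i`) and
`A_0` the reduced Maxwell-Stefan matrix, the matrix `B⁻¹ = H A_0` is symmetric;
consequently `B = A_0⁻¹ H⁻¹` is symmetric and positive definite. -/
theorem stmt18 (N : ℕ) (hN : 2 ≤ N)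
    (d : Matrix (Fin (N + 1)) (Fin (N + 1)) ℝ) (hd : d.IsSymm)
    (hdpos : ∀ i j, i ≠ j → 0 < d i j) (hddiag : ∀ i, d i i = 0)
    (c : Fin (N + 1) → ℝ) (hc : ∀ i, 0 < c i) (hsum : ∑ i, c i = 1)
    (A0 : Matrix (Fin N) (Fin N) ℝ)
    (hA0off : ∀ i j : Fin N, i ≠ j → A0 i j =
      -(d i.castSucc j.castSucc - d i.castSucc (Fin.last N)) * c i.castSucc)
    (hA0diag : ∀ i : Fin N, A0 i i =
      (∑ j ∈ Finset.univ.erase i,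
        (d i.castSucc j.castSucc - d i.castSucc (Fin.last N)) * c j.castSucc) +
        d i.castSucc (Fin.last N))
    (H : Matrix (Fin N) (Fin N) ℝ)
    (hH : ∀ i j, H i j = 1 / c (Fin.last N) +
      (if i = j then 1 / c i.castSucc else 0)) :
    (H * A0).IsSymm ∧ (A0⁻¹ * H⁻¹).IsSymm ∧ (A0⁻¹ * H⁻¹).PosDef :=
  stmt18_general N d hd hdpos c hc hsum A0 hA0off hA0diag H hH
end
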